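/- Suppose the symmetric Assumption 2.1(i) holds and let η ∈ [−1,1]. Define f₂(z) = (B(z)+C(z) − z^K·T)² − η²·F(z)² and g₂(z) = 4η²·A(z)·D(z). Then for every z ∈ ℂ with |z| = 1: |f₂(z)| ≥ f₂(1) and |g₂(z)| ≤ g₂(1); moreover f₂(1) − g₂(1) = (1−η²)·(A(1)+D(1))² ≥ 0. -/

import Mathlib

open scoped BigOperators

/-- `GC a z = Σ_{m=0}^∞ a_m z^m`, encoding `A(z) = Σ_{k=-∞}^K a_k z^{K-k}`
via the reindexing `m = K - k`. -/
noncomputable def GC (a : ℕ → ℝ) (z : ℂ) : ℂ := ∑' m : ℕ, (a m : ℂ) * z ^ m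

/-- `A(1)` (a real number). -/
noncomputable def Gone (a : ℕ → ℝ) : ℝ := ∑' m : ℕ, a m

/-- `A'(1) = Σ_{k=-∞}^K (K-k) a_k`. -/
noncomputable def Gder (a : ℕ → ℝ) : ℝ := ∑' m : ℕ, (m : ℝ) * a m

/-- `T = A(1)+B(1)+C(1)+D(1)`. -/
noncomputable def Tval (a b cc d : ℕ → ℝ) : ℝ := Gone a + Gone b + Gone cc + Gone d

/-- `F(z) = z^K (A(1)+B(1)-C(1)-D(1)) - B(z) + C(z)`. -/
noncomputable def FC (K : ℕ) (a b cc d : ℕ → ℝ) (z : ℂ) : ℂ :=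
  z ^ K * ((Gone a + Gone b - Gone cc - Gone d : ℝ) : ℂ) - GC b z + GC cc z

/-- `f₂(z) = (B(z)+C(z) - z^K T)² - η² F(z)²`. -/
noncomputable def f2C (K : ℕ) (a b cc d : ℕ → ℝ) (η : ℝ) (z : ℂ) : ℂ :=
  (GC b z + GC cc z - z ^ K * (Tval a b cc d : ℝ)) ^ 2
    - (η : ℂ) ^ 2 * FC K a b cc d z ^ 2

/-- `g₂(z) = 4η² A(z) D(z)`. -/
noncomputable def g2C (a d : ℕ → ℝ) (η : ℝ) (z : ℂ) : ℂ :=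
  4 * (η : ℂ) ^ 2 * GC a z * GC d z

/-- The (real) value `f₂(1) = (B(1)+C(1) - T)² - η² F(1)²`. -/
noncomputable def f2one (K : ℕ) (a b cc d : ℕ → ℝ) (η : ℝ) : ℝ :=
  (Gone b + Gone cc - Tval a b cc d) ^ 2
    - η ^ 2 * ((Gone a + Gone b - Gone cc - Gone d) - Gone b + Gone cc) ^ 2

/-- The (real) value `g₂(1) = 4η² A(1) D(1)`. -/
noncomputable def g2one (a d : ℕ → ℝ) (η : ℝ) : ℝ := 4 * η ^ 2 * Gone a * Gone d
/-!
Writing `f₂ = X² - η²Y²` with `X = B + C - z^K T` and `Y = F`, the two factors `X ± ηY` are each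
of the form `E(z) - z^K (E(1) + s)`, where `E` is a power series with nonnegative coefficients
(a combination of `B` and `C` with weights `1 ∓ η ≥ 0`) and `s ≥ 0`. On the unit circle
`|E(z)| ≤ E(1)`, so each factor has modulus at least `s`, and the product of the two values of
`s` is exactly `f₂(1)`. The bound on `g₂` is the same estimate `|A(z)|, |D(z)| ≤ A(1), D(1)`.
-/

lemma norm_GC_le {e : ℕ → ℝ} (he : ∀ m, 0 ≤ e m) (hse : Summable e) {z : ℂ} (hz : ‖z‖ ≤ 1) :
    ‖GC e z‖ ≤ Gone e := by
  have hterm : ∀ m, ‖(e m : ℂ) * z ^ m‖ ≤ e m := fun m => by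
    rw [norm_mul, norm_pow, Complex.norm_real, Real.norm_of_nonneg (he m)]
    exact mul_le_of_le_one_right (he m) (pow_le_one₀ (norm_nonneg z) hz)
  exact tsum_of_norm_bounded hse.hasSum hterm

lemma le_norm_sub_smul_of_norm_le {E : Type*} [SeminormedAddCommGroup E] [NormedSpace ℝ E]
    {w u : E} {M : ℝ} (s : ℝ) (hw : ‖w‖ ≤ M) (hu : ‖u‖ = 1) :
    s ≤ ‖w - (M + s) • u‖ := by
  calc s ≤ |M + s| - ‖w‖ := by linarith [le_abs_self (M + s)]
    _ = ‖(M + s) • u‖ - ‖w‖ := by rw [norm_smul, hu, mul_one, Real.norm_eq_abs]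
    _ ≤ ‖w - (M + s) • u‖ := by rw [norm_sub_rev]; exact norm_sub_norm_le _ _

lemma norm_mul_add_mul_le {x y : ℂ} {X Y r t : ℝ} (hr : 0 ≤ r) (ht : 0 ≤ t)
    (hx : ‖x‖ ≤ X) (hy : ‖y‖ ≤ Y) : ‖(r : ℂ) * x + (t : ℂ) * y‖ ≤ r * X + t * Y := by
  calc ‖(r : ℂ) * x + (t : ℂ) * y‖ ≤ r * ‖x‖ + t * ‖y‖ := by
        refine (norm_add_le _ _).trans_eq ?_
        rw [norm_mul, norm_mul, Complex.norm_real, Complex.norm_real,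
          Real.norm_of_nonneg hr, Real.norm_of_nonneg ht]
    _ ≤ r * X + t * Y := by gcongr

noncomputable def f2Factor (K : ℕ) (a b cc d : ℕ → ℝ) (η : ℝ) (z : ℂ) : ℂ :=
  (((1 - η : ℝ) : ℂ) * GC b z + ((1 + η : ℝ) : ℂ) * GC cc z)
    - (((1 - η) * Gone b + (1 + η) * Gone cc) + ((1 - η) * Gone a + (1 + η) * Gone d)) • z ^ K

lemma f2C_eq_mul_f2Factor (K : ℕ) (a b cc d : ℕ → ℝ) (η : ℝ) (z : ℂ) :
    f2C K a b cc d η z = f2Factor K a b cc d η z * f2Factor K a b cc d (-η) z := by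
  simp only [f2C, f2Factor, FC, Tval, Complex.real_smul]
  push_cast
  ring

lemma f2one_eq_mul (K : ℕ) (a b cc d : ℕ → ℝ) (η : ℝ) :
    f2one K a b cc d η
      = ((1 - η) * Gone a + (1 + η) * Gone d) * ((1 + η) * Gone a + (1 - η) * Gone d) := by
  simp only [f2one, Tval]
  ring

lemma le_norm_f2Factor (K : ℕ) {a b cc d : ℕ → ℝ} {η : ℝ} (nna : ∀ m, 0 ≤ a m)
    (nnb : ∀ m, 0 ≤ b m) (nnc : ∀ m, 0 ≤ cc m) (nnd : ∀ m, 0 ≤ d m)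
    (sumb : Summable b) (sumc : Summable cc) (hη : η ∈ Set.Icc (-1 : ℝ) 1) {z : ℂ} (hz : ‖z‖ = 1) :
    0 ≤ (1 - η) * Gone a + (1 + η) * Gone d
      ∧ (1 - η) * Gone a + (1 + η) * Gone d ≤ ‖f2Factor K a b cc d η z‖ := by
  obtain ⟨hη₁, hη₂⟩ := hη
  have hBC : ‖((1 - η : ℝ) : ℂ) * GC b z + ((1 + η : ℝ) : ℂ) * GC cc z‖
      ≤ (1 - η) * Gone b + (1 + η) * Gone cc :=
    norm_mul_add_mul_le (by linarith) (by linarith)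
      (norm_GC_le nnb sumb hz.le) (norm_GC_le nnc sumc hz.le)
  refine ⟨?_, le_norm_sub_smul_of_norm_le _ hBC (by rw [norm_pow, hz, one_pow])⟩
  have hA : 0 ≤ Gone a := tsum_nonneg nna
  have hD : 0 ≤ Gone d := tsum_nonneg nnd
  exact add_nonneg (mul_nonneg (by linarith) hA) (mul_nonneg (by linarith) hD)

lemma norm_g2C_le {a d : ℕ → ℝ} (nna : ∀ m, 0 ≤ a m) (nnd : ∀ m, 0 ≤ d m)
    (suma : Summable a) (sumd : Summable d) (η : ℝ) {z : ℂ} (hz : ‖z‖ ≤ 1) :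
    ‖g2C a d η z‖ ≤ g2one a d η := by
  have hA := norm_GC_le nna suma hz
  have hD := norm_GC_le nnd sumd hz
  rw [g2C, g2one, norm_mul, norm_mul, norm_mul, norm_pow, Complex.norm_real, Real.norm_eq_abs,
    sq_abs, Complex.norm_ofNat]
  gcongr
  exact mul_nonneg (by positivity) ((norm_nonneg _).trans hA)

theorem stmt10_general (K : ℕ) (a b cc d : ℕ → ℝ)
    (nna : ∀ m, 0 ≤ a m) (nnb : ∀ m, 0 ≤ b m)
    (nnc : ∀ m, 0 ≤ cc m) (nnd : ∀ m, 0 ≤ d m)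
    (suma : Summable a) (sumb : Summable b) (sumc : Summable cc) (sumd : Summable d)
    (η : ℝ) (hη : η ∈ Set.Icc (-1 : ℝ) 1) :
    (∀ z : ℂ, ‖z‖ = 1 →
        f2one K a b cc d η ≤ ‖f2C K a b cc d η z‖
        ∧ ‖g2C a d η z‖ ≤ g2one a d η)
    ∧ f2one K a b cc d η - g2one a d η = (1 - η ^ 2) * (Gone a + Gone d) ^ 2
    ∧ 0 ≤ (1 - η ^ 2) * (Gone a + Gone d) ^ 2 := by
  have hη' : -η ∈ Set.Icc (-1 : ℝ) 1 := ⟨by linarith [hη.2], by linarith [hη.1]⟩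
  refine ⟨fun z hz => ⟨?_, norm_g2C_le nna nnd suma sumd η hz.le⟩, ?_, ?_⟩
  · obtain ⟨hP₀, hP⟩ := le_norm_f2Factor K nna nnb nnc nnd sumb sumc hη hz
    obtain ⟨hQ₀, hQ⟩ := le_norm_f2Factor K nna nnb nnc nnd sumb sumc hη' hz
    rw [f2C_eq_mul_f2Factor, norm_mul, f2one_eq_mul]
    simp only [sub_neg_eq_add, ← sub_eq_add_neg] at hQ₀ hQ
    exact mul_le_mul hP hQ hQ₀ (hP₀.trans hP)
  · simp only [f2one, g2one, Tval]
    ring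
  · have : η ^ 2 ≤ 1 := sq_le_one_iff_abs_le_one η |>.mpr (abs_le.mpr hη)
    exact mul_nonneg (by linarith) (sq_nonneg _)

/-- Under the symmetric Assumption 2.1(i), for `η ∈ [-1,1]` and every `z` on the unit
circle: `|f₂(z)| ≥ f₂(1)` and `|g₂(z)| ≤ g₂(1)`; moreover
`f₂(1) - g₂(1) = (1-η²)(A(1)+D(1))² ≥ 0`. -/
theorem stmt10 (c K : ℕ) (hc : 1 ≤ c) (hK : 1 ≤ K) (a b cc d : ℕ → ℝ)
    (nna : ∀ m, 0 ≤ a m) (nnb : ∀ m, 0 ≤ b m)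
    (nnc : ∀ m, 0 ≤ cc m) (nnd : ∀ m, 0 ≤ d m)
    (suma : Summable a) (sumb : Summable b) (sumc : Summable cc) (sumd : Summable d)
    (η : ℝ) (hη : η ∈ Set.Icc (-1 : ℝ) 1) :
    (∀ z : ℂ, ‖z‖ = 1 →
        f2one K a b cc d η ≤ ‖f2C K a b cc d η z‖
        ∧ ‖g2C a d η z‖ ≤ g2one a d η)
    ∧ f2one K a b cc d η - g2one a d η = (1 - η ^ 2) * (Gone a + Gone d) ^ 2
    ∧ 0 ≤ (1 - η ^ 2) * (Gone a + Gone d) ^ 2 :=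
  stmt10_general K a b cc d nna nnb nnc nnd suma sumb sumc sumd η hη
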